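/- arXiv:math/0701631 — 2 statements merged into one kernel-verified Lean document; each statement's English description precedes it below -/
import Mathlib

section
/- Let I be a nonzero ideal of R. The following are equivalent: (a) R is an integral domain; (b) the girth of Γ(R⋈I) is 4 or ∞; (c) the ring R⋈I has exactly two minimal prime ideals Q₁ and Q₂, and Q₁ ∩ Q₂ = (0); (d) Γ(R⋈I) is a complete bipartite graph, i.e. its vertex set is the disjoint union of two nonempty parts such that two vertices are adjacent if and only if they lie in different parts. -/
/-- The amalgamated duplication of a commutative ring `R` along an ideal `I`,
realized as the subring `{(a, b) : R × R | b - a ∈ I}` of the product ring `R × R`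
(equivalently, `{(r, r + i) | r ∈ R, i ∈ I}`). -/
def amalg (R : Type*) [CommRing R] (I : Ideal R) : Subring (R × R) where
  carrier := {p | p.2 - p.1 ∈ I}
  zero_mem' := by simp
  one_mem' := by simp
  add_mem' := by
    intro a b ha hb
    show (a + b).2 - (a + b).1 ∈ I
    have h : (a + b).2 - (a + b).1 = (a.2 - a.1) + (b.2 - b.1) := by
      simp only [Prod.fst_add, Prod.snd_add]; ring
    rw [h]; exact I.add_mem ha hb
  neg_mem' := by
    intro a ha
    show (-a).2 - (-a).1 ∈ I
    have h : (-a).2 - (-a).1 = -(a.2 - a.1) := by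
      simp only [Prod.fst_neg, Prod.snd_neg]; ring
    rw [h]; exact I.neg_mem ha
  mul_mem' := by
    intro a b ha hb
    show (a * b).2 - (a * b).1 ∈ I
    have h : (a * b).2 - (a * b).1 = a.2 * (b.2 - b.1) + b.1 * (a.2 - a.1) := by
      simp only [Prod.fst_mul, Prod.snd_mul]; ring
    rw [h]; exact I.add_mem (I.mul_mem_left _ hb) (I.mul_mem_left _ ha)

/-- The set of zero-divisors of a commutative ring `S`:
elements `x` such that `x * y = 0` for some `y ≠ 0`. -/
def zdSet (S : Type*) [CommRing S] : Set S := {x | ∃ y, y ≠ 0 ∧ x * y = 0}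

/-- The zero-divisor graph `Γ(S)` of a commutative ring `S`: the vertices are the nonzero
zero-divisors of `S`, and distinct vertices `x`, `y` are adjacent iff `x * y = 0`. -/
def zdGraph (S : Type*) [CommRing S] : SimpleGraph {x : S // x ≠ 0 ∧ x ∈ zdSet S} where
  Adj a b := a ≠ b ∧ (a : S) * (b : S) = 0
  symm := by
    constructor
    rintro a b ⟨h1, h2⟩
    exact ⟨h1.symm, by rwa [mul_comm]⟩
  loopless := by constructor; rintro a ⟨h, -⟩; exact h rfl

section GraphLemmas
open SimpleGraph

lemma egirth_le_of_cycle {α : Type*} {G : SimpleGraph α} {a : α} {w : G.Walk a a}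
    (h : w.IsCycle) : G.egirth ≤ w.length :=
  iInf_le_of_le a (iInf_le_of_le w (iInf_le _ h))

lemma my_egirth_le_three {α : Type*} {G : SimpleGraph α} {a b c : α}
    (hab : G.Adj a b) (hbc : G.Adj b c) (hca : G.Adj c a) : G.egirth ≤ 3 := by
  have hw : (SimpleGraph.Walk.cons hab (.cons hbc (.cons hca .nil))).IsCycle := by
    rw [SimpleGraph.Walk.cons_isCycle_iff]
    refine ⟨?_, ?_⟩
    · simp [SimpleGraph.Walk.cons_isPath_iff, hbc.ne, hca.ne, hca.ne', hab.ne, hab.ne']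
    · simp [hab.ne, hbc.ne, hca.ne, hca.ne', hab.ne', hbc.ne', Sym2.eq, Sym2.rel_iff]
  have := egirth_le_of_cycle hw
  simpa using this

lemma my_egirth_le_four {α : Type*} {G : SimpleGraph α} {a b c d : α}
    (hab : G.Adj a b) (hbc : G.Adj b c) (hcd : G.Adj c d) (hda : G.Adj d a)
    (hac : a ≠ c) (hbd : b ≠ d) : G.egirth ≤ 4 := by
  have hw : (SimpleGraph.Walk.cons hab (.cons hbc (.cons hcd (.cons hda .nil)))).IsCycle := by
    rw [SimpleGraph.Walk.cons_isCycle_iff]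
    refine ⟨?_, ?_⟩
    · simp [SimpleGraph.Walk.cons_isPath_iff, hbc.ne, hcd.ne, hda.ne, hda.ne', hab.ne, hab.ne',
        hac, hbd, hac.symm, hbd.symm]
    · simp [hab.ne, hbc.ne, hcd.ne, hda.ne, hda.ne', hab.ne', hbc.ne', hcd.ne', hac, hbd,
        hac.symm, hbd.symm, Sym2.eq, Sym2.rel_iff]
  have := egirth_le_of_cycle hw
  simpa using this

lemma four_le_egirth_of_coloring {α : Type*} {G : SimpleGraph α} (c : G.Coloring Bool) :
    4 ≤ G.egirth := by
  rw [SimpleGraph.le_egirth]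
  intro a w hw
  have h3 := hw.three_le_length
  obtain ⟨k, hk⟩ : Even w.length := (c.even_length_iff_congr w).mpr Iff.rfl
  have : 4 ≤ w.length := by omega
  exact_mod_cast this

end GraphLemmas

section Helpers
variable {R : Type*} [CommRing R] {I : Ideal R}

def amk (a b : R) (h : b - a ∈ I) : amalg R I := ⟨(a, b), h⟩

lemma amk_mul (a b c d : R) (h : b - a ∈ I) (h' : d - c ∈ I) :
    (amk a b h : amalg R I) * amk c d h' = amk (a*c) (b*d) (by
      have hh : b*d - a*c = b*(d-c) + c*(b-a) := by ring
      rw [hh]; exact I.add_mem (I.mul_mem_left _ h') (I.mul_mem_left _ h)) := rfl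

lemma amk_eq_zero {a b : R} {h : b - a ∈ I} :
    (amk a b h : amalg R I) = 0 ↔ a = 0 ∧ b = 0 := by
  constructor
  · intro hz
    have := congrArg (fun x : amalg R I => x.val) hz
    simpa [amk, Prod.ext_iff] using this
  · rintro ⟨rfl, rfl⟩; rfl

lemma amk_inj {a b c d : R} {h : b - a ∈ I} {h' : d - c ∈ I} :
    (amk a b h : amalg R I) = amk c d h' ↔ a = c ∧ b = d := by
  constructor
  · intro hz
    have := congrArg (fun x : amalg R I => x.val) hz
    simpa [amk, Prod.ext_iff] using this
  · rintro ⟨rfl, rfl⟩; rfl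

lemma exists_orth [Nontrivial R] (hI : I ≠ ⊥) (hnd : ¬ IsDomain R) :
    ∃ x y z : amalg R I, x*y = 0 ∧ x*z = 0 ∧ y*z = 0 ∧
      x ≠ 0 ∧ y ≠ 0 ∧ z ≠ 0 ∧ x ≠ y ∧ x ≠ z ∧ y ≠ z := by
  have hzz : ¬ ∀ (a b : R), a * b = 0 → a = 0 ∨ b = 0 := by
    intro H
    haveI : NoZeroDivisors R := ⟨fun {a b} hab => H a b hab⟩
    exact hnd (NoZeroDivisors.to_isDomain R)
  push_neg at hzz
  obtain ⟨a, b, hab, ha, hb⟩ := hzz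
  obtain ⟨i, hiI, hi0⟩ := (Submodule.ne_bot_iff I).mp hI
  obtain ⟨c, hcI, hc0, d, hd0, hdc⟩ :
      ∃ c, c ∈ I ∧ c ≠ 0 ∧ ∃ d, d ≠ 0 ∧ d * c = 0 := by
    by_cases hib : i * b = 0
    · exact ⟨i, hiI, hi0, b, hb, by rw [mul_comm]; exact hib⟩
    · refine ⟨i*b, I.mul_mem_right b hiI, hib, a, ha, ?_⟩
      calc a * (i*b) = i * (a*b) := by ring
        _ = 0 := by rw [hab, mul_zero]
  have hcI' : (0:R) - c ∈ I := by simpa using I.neg_mem hcI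
  have hcI'' : c - 0 ∈ I := by simpa using hcI
  have hdd : d - d ∈ I := by simp
  refine ⟨amk 0 c hcI'', amk c 0 hcI', amk d d hdd, ?_, ?_, ?_, ?_, ?_, ?_, ?_, ?_, ?_⟩
  · rw [amk_mul]; exact amk_eq_zero.mpr ⟨zero_mul c, mul_zero c⟩
  · rw [amk_mul]; exact amk_eq_zero.mpr ⟨zero_mul d, by rw [mul_comm]; exact hdc⟩
  · rw [amk_mul]; exact amk_eq_zero.mpr ⟨by rw [mul_comm]; exact hdc, zero_mul d⟩
  · rw [Ne, amk_eq_zero]; tauto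
  · rw [Ne, amk_eq_zero]; tauto
  · rw [Ne, amk_eq_zero]; tauto
  · rw [Ne, amk_inj]; tauto
  · rw [Ne, amk_inj]; intro hh; exact hd0 hh.1.symm
  · rw [Ne, amk_inj]; intro hh; exact hd0 hh.2.symm

lemma exists_triangle [Nontrivial R] (hI : I ≠ ⊥) (hnd : ¬ IsDomain R) :
    ∃ u v w : {x : ↥(amalg R I) // x ≠ 0 ∧ x ∈ zdSet ↥(amalg R I)},
      (zdGraph ↥(amalg R I)).Adj u v ∧ (zdGraph ↥(amalg R I)).Adj v w ∧
      (zdGraph ↥(amalg R I)).Adj w u := by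
  obtain ⟨x, y, z, hxy, hxz, hyz, hx0, hy0, hz0, hxy', hxz', hyz'⟩ := exists_orth hI hnd
  refine ⟨⟨x, hx0, y, hy0, hxy⟩, ⟨y, hy0, x, hx0, by rwa [mul_comm]⟩,
    ⟨z, hz0, x, hx0, by rwa [mul_comm]⟩, ?_, ?_, ?_⟩
  · exact ⟨fun h => hxy' (congrArg Subtype.val h), hxy⟩
  · exact ⟨fun h => hyz' (congrArg Subtype.val h), hyz⟩
  · exact ⟨fun h => hxz' (congrArg Subtype.val h).symm, by rwa [mul_comm]⟩

lemma vertex_struct [IsDomain R] {v : ↥(amalg R I)} (hv : v ≠ 0)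
    (hzd : v ∈ zdSet ↥(amalg R I)) :
    (v.val.1 = 0 ∧ v.val.2 ≠ 0 ∧ v.val.2 ∈ I) ∨
    (v.val.2 = 0 ∧ v.val.1 ≠ 0 ∧ v.val.1 ∈ I) := by
  obtain ⟨w, hw0, hvw⟩ := hzd
  have hval : v.val * w.val = 0 := congrArg Subtype.val hvw
  have h1 : v.val.1 * w.val.1 = 0 := congrArg Prod.fst hval
  have h2 : v.val.2 * w.val.2 = 0 := congrArg Prod.snd hval
  have hvmem : v.val.2 - v.val.1 ∈ I := v.2
  by_cases ha : v.val.1 = 0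
  · left
    refine ⟨ha, ?_, ?_⟩
    · intro hb
      exact hv (Subtype.ext (Prod.ext ha hb))
    · simpa [ha] using hvmem
  · right
    have hw1 : w.val.1 = 0 := (mul_eq_zero.mp h1).resolve_left ha
    have hw2 : w.val.2 ≠ 0 := fun hh => hw0 (Subtype.ext (Prod.ext hw1 hh))
    have hv2 : v.val.2 = 0 := (mul_eq_zero.mp h2).resolve_right hw2
    refine ⟨hv2, ha, ?_⟩
    have : -v.val.1 ∈ I := by simpa [hv2] using hvmem
    simpa using I.neg_mem this

lemma vtx_left (i : R) (hiI : i ∈ I) (hi : i ≠ 0) :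
    (amk 0 i (by simpa using hiI) : amalg R I) ≠ 0 ∧
      (amk 0 i (by simpa using hiI) : amalg R I) ∈ zdSet ↥(amalg R I) := by
  constructor
  · rw [Ne, amk_eq_zero]; tauto
  · refine ⟨amk i 0 (by simpa using I.neg_mem hiI), ?_, ?_⟩
    · rw [Ne, amk_eq_zero]; tauto
    · rw [amk_mul]; exact amk_eq_zero.mpr ⟨zero_mul i, mul_zero i⟩

lemma vtx_right (i : R) (hiI : i ∈ I) (hi : i ≠ 0) :
    (amk i 0 (by simpa using I.neg_mem hiI) : amalg R I) ≠ 0 ∧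
      (amk i 0 (by simpa using I.neg_mem hiI) : amalg R I) ∈ zdSet ↥(amalg R I) := by
  constructor
  · rw [Ne, amk_eq_zero]; tauto
  · refine ⟨amk 0 i (by simpa using hiI), ?_, ?_⟩
    · rw [Ne, amk_eq_zero]; tauto
    · rw [amk_mul]; exact amk_eq_zero.mpr ⟨mul_zero i, zero_mul i⟩

noncomputable def partColoring (R : Type*) [CommRing R] [IsDomain R] (I : Ideal R) :
    (zdGraph ↥(amalg R I)).Coloring Bool := by
  classical
  refine SimpleGraph.Coloring.mk (fun v => if v.val.val.1 = 0 then true else false) ?_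
  rintro u v ⟨hne, hmul⟩
  have hval : u.val.val * v.val.val = 0 := congrArg Subtype.val hmul
  have h1 : u.val.val.1 * v.val.val.1 = 0 := congrArg Prod.fst hval
  have h2 : u.val.val.2 * v.val.val.2 = 0 := congrArg Prod.snd hval
  by_cases hu : u.val.val.1 = 0 <;> by_cases hv : v.val.val.1 = 0
  · exfalso
    have hu2 : u.val.val.2 ≠ 0 := fun hh => u.2.1 (Subtype.ext (Prod.ext hu hh))
    have hv2 : v.val.val.2 ≠ 0 := fun hh => v.2.1 (Subtype.ext (Prod.ext hv hh))
    rcases mul_eq_zero.mp h2 with h | h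
    · exact hu2 h
    · exact hv2 h
  · simp [hu, hv]
  · simp [hu, hv]
  · exfalso
    rcases mul_eq_zero.mp h1 with h | h
    · exact hu h
    · exact hv h

lemma exists_two [IsDomain R] (hnac : ¬ (zdGraph ↥(amalg R I)).IsAcyclic) :
    ∃ i j : R, i ∈ I ∧ j ∈ I ∧ i ≠ 0 ∧ j ≠ 0 ∧ i ≠ j := by
  obtain ⟨a, w, hw, _⟩ := SimpleGraph.exists_egirth_eq_length.mpr hnac
  have h3 := hw.three_le_length
  have hlen : 3 ≤ w.support.tail.length := by
    have hs := w.length_support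
    have ht : w.support.tail.length = w.support.length - 1 := List.length_tail
    omega
  have hnodup := hw.support_nodup
  set l := w.support.tail with hldef
  clear_value l
  obtain ⟨v₁, v₂, v₃, t, rfl⟩ : ∃ v₁ v₂ v₃ t, l = v₁ :: v₂ :: v₃ :: t := by
    rcases l with _ | ⟨v₁, _ | ⟨v₂, _ | ⟨v₃, t⟩⟩⟩
    · simp at hlen
    · simp at hlen
    · simp at hlen
    · exact ⟨v₁, v₂, v₃, t, rfl⟩
  simp only [List.nodup_cons, List.mem_cons] at hnodup
  have h12 : v₁ ≠ v₂ := fun h => hnodup.1 (Or.inl h)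
  have h13 : v₁ ≠ v₃ := fun h => hnodup.1 (Or.inr (Or.inl h))
  have h23 : v₂ ≠ v₃ := fun h => hnodup.2.1 (Or.inl h)
  have sameL : ∀ u v : {x : ↥(amalg R I) // x ≠ 0 ∧ x ∈ zdSet ↥(amalg R I)}, u ≠ v →
      u.val.val.1 = 0 → v.val.val.1 = 0 →
      ∃ i j : R, i ∈ I ∧ j ∈ I ∧ i ≠ 0 ∧ j ≠ 0 ∧ i ≠ j := by
    intro u v huv hu hv
    refine ⟨u.val.val.2, v.val.val.2, ?_, ?_, ?_, ?_, ?_⟩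
    · have hmem : u.val.val.2 - u.val.val.1 ∈ I := u.val.2
      simpa [hu] using hmem
    · have hmem : v.val.val.2 - v.val.val.1 ∈ I := v.val.2
      simpa [hv] using hmem
    · exact fun hh => u.2.1 (Subtype.ext (Prod.ext hu hh))
    · exact fun hh => v.2.1 (Subtype.ext (Prod.ext hv hh))
    · intro hh
      exact huv (Subtype.ext (Subtype.ext (Prod.ext (hu.trans hv.symm) hh)))
  have sameR : ∀ u v : {x : ↥(amalg R I) // x ≠ 0 ∧ x ∈ zdSet ↥(amalg R I)}, u ≠ v →
      u.val.val.1 ≠ 0 → v.val.val.1 ≠ 0 →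
      ∃ i j : R, i ∈ I ∧ j ∈ I ∧ i ≠ 0 ∧ j ≠ 0 ∧ i ≠ j := by
    intro u v huv hu hv
    have hu' := (vertex_struct u.2.1 u.2.2).resolve_left (fun h => hu h.1)
    have hv' := (vertex_struct v.2.1 v.2.2).resolve_left (fun h => hv h.1)
    refine ⟨u.val.val.1, v.val.val.1, hu'.2.2, hv'.2.2, hu, hv, ?_⟩
    intro hh
    exact huv (Subtype.ext (Subtype.ext (Prod.ext hh (hu'.1.trans hv'.1.symm))))
  by_cases hc1 : v₁.val.val.1 = 0 <;> by_cases hc2 : v₂.val.val.1 = 0 <;>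
    by_cases hc3 : v₃.val.val.1 = 0
  · exact sameL v₁ v₂ h12 hc1 hc2
  · exact sameL v₁ v₂ h12 hc1 hc2
  · exact sameL v₁ v₃ h13 hc1 hc3
  · exact sameR v₂ v₃ h23 hc2 hc3
  · exact sameL v₂ v₃ h23 hc2 hc3
  · exact sameR v₁ v₃ h13 hc1 hc3
  · exact sameR v₁ v₂ h12 hc1 hc2
  · exact sameR v₁ v₂ h12 hc1 hc2

end Helpers

set_option maxHeartbeats 1000000 in
/-- for a nonzero ideal `I`, the following are equivalent:
(a) `R` is a domain; (b) `girth Γ(R ⋈ I)` is `4` or `∞`;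
(c) `R ⋈ I` has exactly two minimal primes `Q₁, Q₂` with `Q₁ ∩ Q₂ = (0)`;
(d) `Γ(R ⋈ I)` is a complete bipartite graph. -/
theorem stmt9 (R : Type*) [CommRing R] [Nontrivial R] (I : Ideal R) (hI : I ≠ ⊥) :
    (IsDomain R ↔
      ((zdGraph ↥(amalg R I)).egirth = 4 ∨ (zdGraph ↥(amalg R I)).egirth = ⊤)) ∧
    (IsDomain R ↔
      ∃ Q₁ Q₂ : Ideal ↥(amalg R I), Q₁ ≠ Q₂ ∧
        minimalPrimes ↥(amalg R I) = {Q₁, Q₂} ∧ Q₁ ⊓ Q₂ = ⊥) ∧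
    (IsDomain R ↔
      ∃ A : Set {x : ↥(amalg R I) // x ≠ 0 ∧ x ∈ zdSet ↥(amalg R I)},
        A.Nonempty ∧ Aᶜ.Nonempty ∧
        ∀ u v, (zdGraph ↥(amalg R I)).Adj u v ↔
          ((u ∈ A ∧ v ∉ A) ∨ (u ∉ A ∧ v ∈ A))) := by
  obtain ⟨i, hiI, hi0⟩ := (Submodule.ne_bot_iff I).mp hI
  refine ⟨⟨?_, ?_⟩, ⟨?_, ?_⟩, ⟨?_, ?_⟩⟩
  -- (b) forward
  · intro hD
    by_cases hT : (zdGraph ↥(amalg R I)).egirth = ⊤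
    · exact Or.inr hT
    left
    have h4 := four_le_egirth_of_coloring (partColoring R I)
    have hnac : ¬ (zdGraph ↥(amalg R I)).IsAcyclic :=
      fun h => hT (SimpleGraph.egirth_eq_top.mpr h)
    obtain ⟨a, b, haI, hbI, ha, hb, hab⟩ := exists_two hnac
    have haI' : a - 0 ∈ I := by simpa using haI
    have hbI' : b - 0 ∈ I := by simpa using hbI
    have haI'' : (0:R) - a ∈ I := by simpa using I.neg_mem haI
    have hbI'' : (0:R) - b ∈ I := by simpa using I.neg_mem hbI
    set p : {x : ↥(amalg R I) // x ≠ 0 ∧ x ∈ zdSet ↥(amalg R I)} :=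
      ⟨amk 0 a haI', vtx_left a haI ha⟩ with hpdef
    set q : {x : ↥(amalg R I) // x ≠ 0 ∧ x ∈ zdSet ↥(amalg R I)} :=
      ⟨amk b 0 hbI'', vtx_right b hbI hb⟩ with hqdef
    set r : {x : ↥(amalg R I) // x ≠ 0 ∧ x ∈ zdSet ↥(amalg R I)} :=
      ⟨amk 0 b hbI', vtx_left b hbI hb⟩ with hrdef
    set s : {x : ↥(amalg R I) // x ≠ 0 ∧ x ∈ zdSet ↥(amalg R I)} :=
      ⟨amk a 0 haI'', vtx_right a haI ha⟩ with hsdef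
    have hvals : ∀ u v : {x : ↥(amalg R I) // x ≠ 0 ∧ x ∈ zdSet ↥(amalg R I)},
        u = v → u.val = v.val := fun u v h => congrArg Subtype.val h
    have hpq : (zdGraph ↥(amalg R I)).Adj p q := by
      refine ⟨fun h => hb ?_, ?_⟩
      · have := hvals _ _ h
        rw [hpdef, hqdef] at this
        exact (amk_inj.mp this).1.symm
      · show (amk 0 a haI' : amalg R I) * amk b 0 hbI'' = 0
        rw [amk_mul]; exact amk_eq_zero.mpr ⟨zero_mul b, mul_zero a⟩
    have hqr : (zdGraph ↥(amalg R I)).Adj q r := by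
      refine ⟨fun h => hb ?_, ?_⟩
      · have := hvals _ _ h
        rw [hqdef, hrdef] at this
        exact (amk_inj.mp this).1
      · show (amk b 0 hbI'' : amalg R I) * amk 0 b hbI' = 0
        rw [amk_mul]; exact amk_eq_zero.mpr ⟨mul_zero b, zero_mul b⟩
    have hrs : (zdGraph ↥(amalg R I)).Adj r s := by
      refine ⟨fun h => ha ?_, ?_⟩
      · have := hvals _ _ h
        rw [hrdef, hsdef] at this
        exact (amk_inj.mp this).1.symm
      · show (amk 0 b hbI' : amalg R I) * amk a 0 haI'' = 0
        rw [amk_mul]; exact amk_eq_zero.mpr ⟨zero_mul a, mul_zero b⟩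
    have hsp : (zdGraph ↥(amalg R I)).Adj s p := by
      refine ⟨fun h => ha ?_, ?_⟩
      · have := hvals _ _ h
        rw [hsdef, hpdef] at this
        exact (amk_inj.mp this).1
      · show (amk a 0 haI'' : amalg R I) * amk 0 a haI' = 0
        rw [amk_mul]; exact amk_eq_zero.mpr ⟨mul_zero a, zero_mul a⟩
    have hpr : p ≠ r := by
      intro h
      have := hvals _ _ h
      rw [hpdef, hrdef] at this
      exact hab (amk_inj.mp this).2
    have hqs : q ≠ s := by
      intro h
      have := hvals _ _ h
      rw [hqdef, hsdef] at this
      exact hab (amk_inj.mp this).1.symm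
    exact le_antisymm (my_egirth_le_four hpq hqr hrs hsp hpr hqs) h4
  -- (b) backward
  · intro hg
    by_contra hnd
    obtain ⟨u, v, w, h1, h2, h3⟩ := exists_triangle hI hnd
    have hle := my_egirth_le_three h1 h2 h3
    rcases hg with h | h <;> rw [h] at hle
    · exact absurd hle (by norm_num)
    · exact absurd hle (by simp)
  -- (c) forward
  · intro hD
    let f₁ : ↥(amalg R I) →+* R := (RingHom.fst R R).comp (amalg R I).subtype
    let f₂ : ↥(amalg R I) →+* R := (RingHom.snd R R).comp (amalg R I).subtype
    have hm1 : ∀ x : ↥(amalg R I), x ∈ RingHom.ker f₁ ↔ x.val.1 = 0 :=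
      fun x => RingHom.mem_ker
    have hm2 : ∀ x : ↥(amalg R I), x ∈ RingHom.ker f₂ ↔ x.val.2 = 0 :=
      fun x => RingHom.mem_ker
    have hP1 : (RingHom.ker f₁).IsPrime := RingHom.ker_isPrime f₁
    have hP2 : (RingHom.ker f₂).IsPrime := RingHom.ker_isPrime f₂
    have hx₀1 : (amk 0 i (by simpa using hiI) : amalg R I) ∈ RingHom.ker f₁ :=
      (hm1 _).mpr rfl
    have hx₀2 : (amk 0 i (by simpa using hiI) : amalg R I) ∉ RingHom.ker f₂ :=
      fun h => hi0 ((hm2 _).mp h)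
    have hy₀2 : (amk i 0 (by simpa using I.neg_mem hiI) : amalg R I) ∈ RingHom.ker f₂ :=
      (hm2 _).mpr rfl
    have hy₀1 : (amk i 0 (by simpa using I.neg_mem hiI) : amalg R I) ∉ RingHom.ker f₁ :=
      fun h => hi0 ((hm1 _).mp h)
    have key : ∀ P : Ideal ↥(amalg R I), P.IsPrime →
        RingHom.ker f₁ ≤ P ∨ RingHom.ker f₂ ≤ P := by
      intro P hP
      by_contra hcon
      push_neg at hcon
      obtain ⟨x, hx1, hxP⟩ := SetLike.not_le_iff_exists.mp hcon.1
      obtain ⟨y, hy2, hyP⟩ := SetLike.not_le_iff_exists.mp hcon.2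
      have hxy : x * y = 0 := by
        apply Subtype.ext
        apply Prod.ext
        · show x.val.1 * y.val.1 = (0:R)
          rw [(hm1 x).mp hx1, zero_mul]
        · show x.val.2 * y.val.2 = (0:R)
          rw [(hm2 y).mp hy2, mul_zero]
      rcases hP.mem_or_mem (show x * y ∈ P by rw [hxy]; exact P.zero_mem) with h | h
      · exact hxP h
      · exact hyP h
    refine ⟨RingHom.ker f₁, RingHom.ker f₂, ?_, ?_, ?_⟩
    · intro h
      exact hx₀2 (h ▸ hx₀1)
    · rw [minimalPrimes_eq_minimals]
      ext J
      simp only [Set.mem_setOf_eq, Set.mem_insert_iff, Set.mem_singleton_iff]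
      constructor
      · rintro ⟨hJ, hJmin⟩
        rcases key J hJ with h | h
        · exact Or.inl (le_antisymm (hJmin hP1 h) h)
        · exact Or.inr (le_antisymm (hJmin hP2 h) h)
      · rintro (rfl | rfl)
        · refine ⟨hP1, fun K hK hKle => ?_⟩
          rcases key K hK with h | h
          · exact h
          · exact absurd (hKle (h hy₀2)) hy₀1
        · refine ⟨hP2, fun K hK hKle => ?_⟩
          rcases key K hK with h | h
          · exact absurd (hKle (h hx₀1)) hx₀2
          · exact h
    · rw [eq_bot_iff]
      intro x hx
      obtain ⟨h1, h2⟩ := Submodule.mem_inf.mp hx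
      exact Ideal.mem_bot.mpr (Subtype.ext (Prod.ext ((hm1 x).mp h1) ((hm2 x).mp h2)))
  -- (c) backward
  · rintro ⟨Q₁, Q₂, hne, hmin, hinf⟩
    by_contra hnd
    obtain ⟨x, y, z, hxy, hxz, hyz, hx0, hy0, hz0, -, -, -⟩ := exists_orth hI hnd
    have hQ1 : Q₁ ∈ minimalPrimes ↥(amalg R I) := by rw [hmin]; exact Set.mem_insert _ _
    have hQ2 : Q₂ ∈ minimalPrimes ↥(amalg R I) := by
      rw [hmin]; exact Set.mem_insert_of_mem _ rfl
    have hp1 : Q₁.IsPrime := hQ1.1.1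
    have hp2 : Q₂.IsPrime := hQ2.1.1
    have notboth : ∀ w : ↥(amalg R I), w ≠ 0 → ¬(w ∈ Q₁ ∧ w ∈ Q₂) := by
      rintro w hw ⟨h1, h2⟩
      have hmem : w ∈ Q₁ ⊓ Q₂ := Submodule.mem_inf.mpr ⟨h1, h2⟩
      rw [hinf] at hmem
      exact hw (Ideal.mem_bot.mp hmem)
    have mo : ∀ (Q : Ideal ↥(amalg R I)), Q.IsPrime →
        ∀ u v : ↥(amalg R I), u * v = 0 → u ∈ Q ∨ v ∈ Q := by
      intro Q hQ u v huv
      exact hQ.mem_or_mem (show u * v ∈ Q by rw [huv]; exact Q.zero_mem)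
    have A1 := mo Q₁ hp1 x y hxy
    have A2 := mo Q₁ hp1 x z hxz
    have A3 := mo Q₁ hp1 y z hyz
    have B1 := mo Q₂ hp2 x y hxy
    have B2 := mo Q₂ hp2 x z hxz
    have B3 := mo Q₂ hp2 y z hyz
    have nx := notboth x hx0
    have ny := notboth y hy0
    have nz := notboth z hz0
    tauto
  -- (d) forward
  · intro hD
    refine ⟨{v | v.val.val.1 = 0},
      ⟨⟨amk 0 i (by simpa using hiI), vtx_left i hiI hi0⟩, rfl⟩,
      ⟨⟨amk i 0 (by simpa using I.neg_mem hiI), vtx_right i hiI hi0⟩, hi0⟩, ?_⟩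
    intro u v
    constructor
    · rintro ⟨hne, hmul⟩
      have hval : u.val.val * v.val.val = 0 := congrArg Subtype.val hmul
      have h1 : u.val.val.1 * v.val.val.1 = 0 := congrArg Prod.fst hval
      have h2 : u.val.val.2 * v.val.val.2 = 0 := congrArg Prod.snd hval
      rcases vertex_struct u.2.1 u.2.2 with hu | hu <;>
        rcases vertex_struct v.2.1 v.2.2 with hv | hv
      · exfalso
        rcases mul_eq_zero.mp h2 with h | h
        · exact hu.2.1 h
        · exact hv.2.1 h
      · exact Or.inl ⟨hu.1, hv.2.1⟩
      · exact Or.inr ⟨hu.2.1, hv.1⟩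
      · exfalso
        rcases mul_eq_zero.mp h1 with h | h
        · exact hu.2.1 h
        · exact hv.2.1 h
    · rintro (⟨hu, hv⟩ | ⟨hu, hv⟩)
      · have hv' := (vertex_struct v.2.1 v.2.2).resolve_left (fun h => hv h.1)
        refine ⟨fun h => hv (h ▸ hu), ?_⟩
        apply Subtype.ext
        apply Prod.ext
        · show u.val.val.1 * v.val.val.1 = (0:R)
          rw [show u.val.val.1 = 0 from hu, zero_mul]
        · show u.val.val.2 * v.val.val.2 = (0:R)
          rw [hv'.1, mul_zero]
      · have hu' := (vertex_struct u.2.1 u.2.2).resolve_left (fun h => hu h.1)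
        refine ⟨fun h => hu (by rw [h]; exact hv), ?_⟩
        apply Subtype.ext
        apply Prod.ext
        · show u.val.val.1 * v.val.val.1 = (0:R)
          rw [show v.val.val.1 = 0 from hv, mul_zero]
        · show u.val.val.2 * v.val.val.2 = (0:R)
          rw [hu'.1, zero_mul]
  -- (d) backward
  · rintro ⟨A, -, -, hadj⟩
    by_contra hnd
    obtain ⟨u, v, w, h1, h2, h3⟩ := exists_triangle hI hnd
    have a1 := (hadj u v).mp h1
    have a2 := (hadj v w).mp h2
    have a3 := (hadj w u).mp h3
    tauto
end

section
/- If the diameter of the zero-divisor graph Γ(R) equals 3, then the diameter of the zero-divisor graph Γ(R⋈I) also equals 3. -/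
section Aux

variable {S : Type*} [CommRing S]

private lemma zd_edist_le_one (x y : {x : S // x ≠ 0 ∧ x ∈ zdSet S})
    (h : (x : S) * (y : S) = 0) : (zdGraph S).edist x y ≤ 1 := by
  by_cases hxy : x = y
  · subst hxy; simp [SimpleGraph.edist_self]
  · have hadj : (zdGraph S).Adj x y := ⟨hxy, h⟩
    calc (zdGraph S).edist x y
        ≤ (SimpleGraph.Walk.cons hadj .nil).length := SimpleGraph.edist_le _
      _ = 1 := rfl

private lemma zd_edist_le_two (x y : {x : S // x ≠ 0 ∧ x ∈ zdSet S}) (c : S) (hc : c ≠ 0)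
    (h1 : (x : S) * c = 0) (h2 : c * (y : S) = 0) : (zdGraph S).edist x y ≤ 2 := by
  by_cases hcx : c = (x : S)
  · exact le_trans (zd_edist_le_one x y (by rw [← hcx]; exact h2)) one_le_two
  by_cases hcy : c = (y : S)
  · exact le_trans (zd_edist_le_one x y (by rw [hcy] at h1; exact h1)) one_le_two
  · have hczd : c ∈ zdSet S := ⟨x, x.2.1, by rw [mul_comm]; exact h1⟩
    set cv : {x : S // x ≠ 0 ∧ x ∈ zdSet S} := ⟨c, hc, hczd⟩ with hcv
    have hadj1 : (zdGraph S).Adj x cv := ⟨fun he => hcx (by rw [he]), h1⟩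
    have hadj2 : (zdGraph S).Adj cv y := ⟨fun he => hcy (by rw [← he]), h2⟩
    calc (zdGraph S).edist x y
        ≤ (SimpleGraph.Walk.cons hadj1 (SimpleGraph.Walk.cons hadj2 .nil)).length :=
          SimpleGraph.edist_le _
      _ = 2 := rfl

private lemma zd_edist_le_three (x y : {x : S // x ≠ 0 ∧ x ∈ zdSet S}) :
    (zdGraph S).edist x y ≤ 3 := by
  obtain ⟨a, ha, hxa⟩ := x.2.2
  obtain ⟨b, hb, hyb⟩ := y.2.2
  have hby : b * (y : S) = 0 := by rw [mul_comm]; exact hyb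
  by_cases hay : a * (y : S) = 0
  · exact le_trans (zd_edist_le_two x y a ha hxa hay) (by norm_num)
  by_cases hxb : (x : S) * b = 0
  · exact le_trans (zd_edist_le_two x y b hb hxb hby) (by norm_num)
  by_cases hab : a * b = 0
  · -- walk x - a - b - y
    have hazd : a ∈ zdSet S := ⟨x, x.2.1, by rw [mul_comm]; exact hxa⟩
    have hbzd : b ∈ zdSet S := ⟨y, y.2.1, hby⟩
    set av : {x : S // x ≠ 0 ∧ x ∈ zdSet S} := ⟨a, ha, hazd⟩
    set bv : {x : S // x ≠ 0 ∧ x ∈ zdSet S} := ⟨b, hb, hbzd⟩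
    have hxav : x ≠ av := fun he => hxb (by
      have : (x : S) = a := by rw [he]
      rw [this]; exact hab)
    have havbv : av ≠ bv := fun he => hay (by
      have : a = b := congrArg Subtype.val he
      rw [this]; exact hby)
    have hbvy : bv ≠ y := fun he => hay (by
      have : b = (y : S) := congrArg Subtype.val he
      rw [← this]; exact hab)
    have hadj1 : (zdGraph S).Adj x av := ⟨hxav, hxa⟩
    have hadj2 : (zdGraph S).Adj av bv := ⟨havbv, hab⟩
    have hadj3 : (zdGraph S).Adj bv y := ⟨hbvy, hby⟩
    calc (zdGraph S).edist x y
        ≤ (SimpleGraph.Walk.cons hadj1 (SimpleGraph.Walk.cons hadj2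
            (SimpleGraph.Walk.cons hadj3 .nil))).length := SimpleGraph.edist_le _
      _ = 3 := rfl
  · -- use c = a * b
    have h1 : (x : S) * (a * b) = 0 := by rw [← mul_assoc, hxa, zero_mul]
    have h2 : (a * b) * (y : S) = 0 := by rw [mul_assoc, hby, mul_zero]
    exact le_trans (zd_edist_le_two x y (a * b) hab h1 h2) (by norm_num)

private lemma walk_le_two' {V : Type*} {G : SimpleGraph V} {u v : V}
    (w : G.Walk u v) (hw : w.length ≤ 2) :
    u = v ∨ G.Adj u v ∨ ∃ c, G.Adj u c ∧ G.Adj c v :=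
  match w, hw with
  | .nil, _ => Or.inl rfl
  | .cons h .nil, _ => Or.inr (Or.inl h)
  | .cons h (.cons h' .nil), _ => Or.inr (Or.inr ⟨_, h, h'⟩)
  | .cons _ (.cons _ (.cons _ _)), hw => by
      simp only [SimpleGraph.Walk.length_cons] at hw; omega

private lemma zd_ediam_le_three (S : Type*) [CommRing S] :
    (zdGraph S).ediam ≤ 3 :=
  SimpleGraph.ediam_le_of_edist_le fun u v => zd_edist_le_three u v

end Aux

/-- if `diam Γ(R) = 3`, then `diam Γ(R ⋈ I) = 3`. -/
theorem stmt14 (R : Type*) [CommRing R] [Nontrivial R] (I : Ideal R)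
    (h : (zdGraph R).ediam = 3) :
    (zdGraph ↥(amalg R I)).ediam = 3 := by
  -- extract a pair at distance > 2 in Γ(R)
  have h2 : (2 : ℕ∞) < (zdGraph R).ediam := by rw [h]; norm_num
  rw [SimpleGraph.ediam, lt_iSup_iff] at h2
  obtain ⟨x, h2⟩ := h2
  rw [SimpleGraph.eccent, lt_iSup_iff] at h2
  obtain ⟨y, h2⟩ := h2
  -- lift x and y to the amalgamation
  have hmem : ∀ r : R, ((r, r) : R × R) ∈ amalg R I := by
    intro r
    show (r : R) - r ∈ I
    simp
  have hzd : ∀ v : {x : R // x ≠ 0 ∧ x ∈ zdSet R},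
      (⟨((v : R), (v : R)), hmem _⟩ : amalg R I) ≠ 0 ∧
      (⟨((v : R), (v : R)), hmem _⟩ : amalg R I) ∈ zdSet (amalg R I) := by
    intro v
    obtain ⟨a, ha, hva⟩ := v.2.2
    refine ⟨?_, ⟨⟨(a, a), hmem a⟩, ?_, ?_⟩⟩
    · intro he
      apply v.2.1
      have := congrArg (fun z : amalg R I => (z : R × R).1) he
      exact this
    · intro he
      apply ha
      have := congrArg (fun z : amalg R I => (z : R × R).1) he
      exact this
    · apply Subtype.ext
      apply Prod.ext <;> exact hva
  set X : {z : amalg R I // z ≠ 0 ∧ z ∈ zdSet (amalg R I)} :=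
    ⟨⟨((x : R), (x : R)), hmem _⟩, hzd x⟩ with hX
  set Y : {z : amalg R I // z ≠ 0 ∧ z ∈ zdSet (amalg R I)} :=
    ⟨⟨((y : R), (y : R)), hmem _⟩, hzd y⟩ with hY
  have hlow : (2 : ℕ∞) < (zdGraph (amalg R I)).edist X Y := by
    by_contra hc
    push_neg at hc
    have hne : (zdGraph (amalg R I)).edist X Y ≠ ⊤ := by
      intro ht
      rw [ht] at hc
      exact absurd (top_le_iff.mp hc) (by norm_num)
    obtain ⟨w, hw⟩ := SimpleGraph.exists_walk_of_edist_ne_top hne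
    have hwl : w.length ≤ 2 := by
      have : (w.length : ℕ∞) ≤ 2 := by rw [hw]; exact hc
      exact_mod_cast this
    apply absurd h2
    push_neg
    rcases walk_le_two' w hwl with hXY | hadj | ⟨C, hadj1, hadj2⟩
    · -- X = Y hence x = y
      have hxy : x = y := by
        apply Subtype.ext
        exact congrArg (fun z : {z : amalg R I // z ≠ 0 ∧ z ∈ zdSet (amalg R I)} =>
          ((z : amalg R I) : R × R).1) hXY
      subst hxy
      simp [SimpleGraph.edist_self]
    · -- X adjacent Y : x * y = 0
      have hmul : (x : R) * (y : R) = 0 := by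
        have := congrArg (fun z : amalg R I => (z : R × R).1) hadj.2
        simpa using this
      exact le_trans (zd_edist_le_one x y hmul) one_le_two
    · have hXC := hadj1.2
      have hCY := hadj2.2
      obtain ⟨⟨⟨c, d⟩, hcd⟩, hC0, hCzd⟩ := C
      have hxc : (x : R) * c = 0 := by
        have := congrArg (fun z : amalg R I => (z : R × R).1) hXC
        simpa using this
      have hxd : (x : R) * d = 0 := by
        have := congrArg (fun z : amalg R I => (z : R × R).2) hXC
        simpa using this
      have hcy : c * (y : R) = 0 := by
        have := congrArg (fun z : amalg R I => (z : R × R).1) hCY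
        simpa using this
      have hdy : d * (y : R) = 0 := by
        have := congrArg (fun z : amalg R I => (z : R × R).2) hCY
        simpa using this
      have hc0 : c ≠ 0 ∨ d ≠ 0 := by
        by_contra hcon
        push_neg at hcon
        apply hC0
        apply Subtype.ext
        apply Prod.ext <;> simp [hcon.1, hcon.2]
      rcases hc0 with hc0 | hd0
      · exact zd_edist_le_two x y c hc0 hxc hcy
      · exact zd_edist_le_two x y d hd0 hxd hdy
  refine le_antisymm (zd_ediam_le_three _) ?_
  calc (3 : ℕ∞) ≤ (zdGraph (amalg R I)).edist X Y := Order.add_one_le_of_lt hlow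
    _ ≤ (zdGraph (amalg R I)).ediam := SimpleGraph.edist_le_ediam
end
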